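/- Fix 0 < α < 1/3. Define the decision rule D : [0,1]² → {0,1}² by: if Φ⁻¹(p1) + Φ⁻¹(p2) ≤ √2 Φ⁻¹(α), reject (only) the hypothesis with the smaller p-value; otherwise reject nothing. Then D is not weakly monotone: for p = (α/2 + α²/4, α/2 − α²/4) and q = (α/3 − α²/4, α/3 + α²/4), we have q ⪯ p coordinatewise yet D(q) ⪰ D(p) fails. -/

import Mathlib

open MeasureTheory ProbabilityTheory Set
open scoped NNReal

/-- The standard normal cumulative distribution function. -/
noncomputable def stdNormalCDF (x : ℝ) : ℝ := (gaussianReal 0 1 (Iic x)).toReal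

/-- The standard normal quantile function. -/
noncomputable def stdNormalQuantile : ℝ → ℝ := Function.invFun stdNormalCDF

lemma cdf_eq (x : ℝ) : stdNormalCDF x = ∫ t in Iic x, gaussianPDFReal 0 1 t := by
  rw [stdNormalCDF, gaussianReal_apply_eq_integral 0 one_ne_zero, ENNReal.toReal_ofReal]
  exact setIntegral_nonneg measurableSet_Iic fun t _ => gaussianPDFReal_nonneg 0 1 t

lemma cdf_sub (a b : ℝ) : stdNormalCDF b - stdNormalCDF a = ∫ t in a..b, gaussianPDFReal 0 1 t := by
  rw [cdf_eq, cdf_eq]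
  exact intervalIntegral.integral_Iic_sub_Iic ((integrable_gaussianPDFReal 0 1).integrableOn)
    ((integrable_gaussianPDFReal 0 1).integrableOn)

lemma cdf_strictMono : StrictMono stdNormalCDF := by
  intro a b hab
  have h := cdf_sub a b
  have hpos : 0 < ∫ t in a..b, gaussianPDFReal 0 1 t := by
    rw [intervalIntegral.integral_of_le hab.le]
    rw [setIntegral_pos_iff_support_of_nonneg_ae
      (ae_of_all _ fun t => gaussianPDFReal_nonneg 0 1 t)
      ((integrable_gaussianPDFReal 0 1).integrableOn)]
    have : Function.support (gaussianPDFReal 0 1) = Set.univ := by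
      ext t; simp [Function.mem_support, (gaussianPDFReal_pos 0 1 t one_ne_zero).ne']
    rw [this, Set.univ_inter, Real.volume_Ioc]
    simp [hab]
  linarith

lemma pdf_le_one (t : ℝ) : gaussianPDFReal 0 1 t ≤ 1 := by
  rw [gaussianPDFReal]
  have h1 : Real.exp (-(t - 0)^2 / (2 * (1:ℝ≥0))) ≤ 1 := by
    rw [Real.exp_le_one_iff]
    apply div_nonpos_of_nonpos_of_nonneg
    · simpa using sq_nonneg (t - 0)
    · norm_num
  have h2 : (1:ℝ) ≤ √(2 * Real.pi * (1:ℝ≥0)) := by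
    rw [show ((2 : ℝ) * Real.pi * (1:ℝ≥0)) = 2 * Real.pi by norm_num]
    rw [show (1:ℝ) = √1 from (Real.sqrt_one).symm]
    exact Real.sqrt_le_sqrt (by nlinarith [Real.pi_gt_three])
  calc (√(2 * Real.pi * (1:ℝ≥0)))⁻¹ * Real.exp (-(t - 0)^2 / (2 * (1:ℝ≥0)))
      ≤ 1 * 1 := by
        apply mul_le_mul _ h1 (Real.exp_nonneg _) zero_le_one
        rw [inv_le_one_iff₀]; right; exact h2
    _ = 1 := one_mul 1

lemma cdf_lipschitz : LipschitzWith 1 stdNormalCDF := by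
  apply LipschitzWith.of_dist_le_mul
  intro x y
  wlog hxy : y ≤ x generalizing x y
  · rw [dist_comm, dist_comm x y]; exact this _ _ (le_of_not_ge hxy)
  rw [Real.dist_eq, Real.dist_eq, NNReal.coe_one, one_mul,
    abs_of_nonneg (sub_nonneg.2 (cdf_strictMono.monotone hxy)),
    abs_of_nonneg (sub_nonneg.2 hxy), cdf_sub, intervalIntegral.integral_of_le hxy]
  calc ∫ t in Ioc y x, gaussianPDFReal 0 1 t ≤ ∫ _t in Ioc y x, (1:ℝ) := by
        apply setIntegral_mono_on ((integrable_gaussianPDFReal 0 1).integrableOn)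
          (integrableOn_const (by simp [Real.volume_Ioc]))
          measurableSet_Ioc
        intro t _; exact pdf_le_one t
    _ = x - y := by
        rw [setIntegral_const, measureReal_def, Real.volume_Ioc, smul_eq_mul, mul_one,
          ENNReal.toReal_ofReal (sub_nonneg.2 hxy)]

lemma cdf_eq_cdf (x : ℝ) : stdNormalCDF x = cdf (gaussianReal 0 1) x :=
  by rw [cdf_eq_real, measureReal_def]; rfl

lemma cdf_surjOn : ∀ y ∈ Ioo (0:ℝ) 1, ∃ x, stdNormalCDF x = y := by
  intro y hy
  have hbot : Filter.Tendsto stdNormalCDF Filter.atBot (nhds 0) := by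
    simp_rw [funext cdf_eq_cdf]; exact tendsto_cdf_atBot _
  have htop : Filter.Tendsto stdNormalCDF Filter.atTop (nhds 1) := by
    simp_rw [funext cdf_eq_cdf]; exact tendsto_cdf_atTop _
  obtain ⟨a, ha⟩ := (hbot.eventually (eventually_lt_nhds hy.1)).exists
  obtain ⟨b, hb⟩ := (htop.eventually (eventually_gt_nhds hy.2)).exists
  rcases le_total a b with hab | hab
  · have := intermediate_value_Icc hab cdf_lipschitz.continuous.continuousOn
    obtain ⟨x, _, hx⟩ := this ⟨ha.le, hb.le⟩
    exact ⟨x, hx⟩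
  · exact absurd (cdf_strictMono.monotone hab) (by push_neg; linarith)

lemma quantile_spec {y : ℝ} (hy : y ∈ Ioo (0:ℝ) 1) :
    stdNormalCDF (stdNormalQuantile y) = y :=
  Function.invFun_eq (cdf_surjOn y hy)

lemma quantile_mono {y₁ y₂ : ℝ} (h1 : y₁ ∈ Ioo (0:ℝ) 1) (h2 : y₂ ∈ Ioo (0:ℝ) 1)
    (h : y₁ ≤ y₂) : stdNormalQuantile y₁ ≤ stdNormalQuantile y₂ := by
  rw [← cdf_strictMono.le_iff_le, quantile_spec h1, quantile_spec h2]; exact h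

lemma cdf_zero_eq : stdNormalCDF 0 = 1 / 2 := by
  have hmap : (gaussianReal 0 1).map (fun x : ℝ => (-1) * x) = gaussianReal 0 1 := by
    rw [gaussianReal_map_const_mul (-1 : ℝ)]
    norm_num
  have hIci : gaussianReal 0 1 (Ici 0) = gaussianReal 0 1 (Iic 0) := by
    conv_lhs => rw [← hmap]
    rw [Measure.map_apply (measurable_const_mul (-1)) measurableSet_Ici]
    congr 1
    ext x
    simp [neg_le]
  have hsum : gaussianReal 0 1 (Iic 0) + gaussianReal 0 1 (Ici 0) = 1 + gaussianReal 0 1 {0} := by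
    rw [← measure_union_add_inter (Iic 0) measurableSet_Ici]
    have h1 : Iic (0:ℝ) ∪ Ici 0 = univ := Iic_union_Ici
    have h2 : Iic (0:ℝ) ∩ Ici 0 = {0} := by ext x; simp [le_antisymm_iff, And.comm]
    rw [h1, h2, measure_univ]
  have hzero : gaussianReal 0 1 {0} = 0 :=
    gaussianReal_absolutelyContinuous 0 one_ne_zero (measure_singleton 0)
  rw [hzero, add_zero, hIci] at hsum
  have : gaussianReal 0 1 (Iic 0) = 1/2 := by
    rw [← two_mul] at hsum
    rw [ENNReal.eq_div_iff two_ne_zero (by norm_num)]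
    exact hsum
  rw [stdNormalCDF, this]
  simp [ENNReal.toReal_div]

lemma quantile_neg {y : ℝ} (hy : y ∈ Ioo (0:ℝ) 1) (hlt : y < 1/2) :
    stdNormalQuantile y < 0 := by
  have := quantile_spec hy
  by_contra h
  push_neg at h
  have := cdf_strictMono.monotone h
  rw [quantile_spec hy, cdf_zero_eq] at this
  linarith

/-- The unrestricted OMT procedure for `Π_any` (reject only the smaller p-value when
Stouffer's test rejects) is not weakly monotone: for `p = (α/2+α²/4, α/2-α²/4)` and
`q = (α/3-α²/4, α/3+α²/4)` we have `q ⪯ p` yet `D(q) ⪰ D(p)` fails. Here rejecting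
hypothesis 1 means the Stouffer condition holds and `p₁ ≤ p₂`; rejecting hypothesis 2
means the Stouffer condition holds and `p₂ < p₁`. -/
theorem stmt_9 (α : ℝ) (hα : α ∈ Set.Ioo (0:ℝ) (1 / 3)) :
    (α / 3 - α ^ 2 / 4 ≤ α / 2 + α ^ 2 / 4) ∧
    (α / 3 + α ^ 2 / 4 ≤ α / 2 - α ^ 2 / 4) ∧
    ¬ (((stdNormalQuantile (α / 2 + α ^ 2 / 4) + stdNormalQuantile (α / 2 - α ^ 2 / 4) ≤
            Real.sqrt 2 * stdNormalQuantile α ∧ α / 2 + α ^ 2 / 4 ≤ α / 2 - α ^ 2 / 4) →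
          (stdNormalQuantile (α / 3 - α ^ 2 / 4) + stdNormalQuantile (α / 3 + α ^ 2 / 4) ≤
            Real.sqrt 2 * stdNormalQuantile α ∧ α / 3 - α ^ 2 / 4 ≤ α / 3 + α ^ 2 / 4)) ∧
        ((stdNormalQuantile (α / 2 + α ^ 2 / 4) + stdNormalQuantile (α / 2 - α ^ 2 / 4) ≤
            Real.sqrt 2 * stdNormalQuantile α ∧ α / 2 - α ^ 2 / 4 < α / 2 + α ^ 2 / 4) →
          (stdNormalQuantile (α / 3 - α ^ 2 / 4) + stdNormalQuantile (α / 3 + α ^ 2 / 4) ≤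
            Real.sqrt 2 * stdNormalQuantile α ∧ α / 3 + α ^ 2 / 4 < α / 3 - α ^ 2 / 4))) := by
  obtain ⟨hα0, hα13⟩ := hα
  have hαmem : α ∈ Ioo (0:ℝ) 1 := ⟨hα0, by linarith⟩
  have hp1mem : α / 2 + α ^ 2 / 4 ∈ Ioo (0:ℝ) 1 := ⟨by nlinarith, by nlinarith⟩
  have hp2mem : α / 2 - α ^ 2 / 4 ∈ Ioo (0:ℝ) 1 := ⟨by nlinarith, by nlinarith⟩
  have hp1le : α / 2 + α ^ 2 / 4 ≤ α := by nlinarith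
  have hp2le : α / 2 - α ^ 2 / 4 ≤ α := by nlinarith
  have hq1 : stdNormalQuantile (α / 2 + α ^ 2 / 4) ≤ stdNormalQuantile α :=
    quantile_mono hp1mem hαmem hp1le
  have hq2 : stdNormalQuantile (α / 2 - α ^ 2 / 4) ≤ stdNormalQuantile α :=
    quantile_mono hp2mem hαmem hp2le
  have hqneg : stdNormalQuantile α < 0 := quantile_neg hαmem (by linarith)
  have hsqrt2 : Real.sqrt 2 ≤ 2 := by
    nlinarith [Real.sq_sqrt (by norm_num : (0:ℝ) ≤ 2), Real.sqrt_nonneg 2]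
  have hstouffer : stdNormalQuantile (α / 2 + α ^ 2 / 4) + stdNormalQuantile (α / 2 - α ^ 2 / 4) ≤
      Real.sqrt 2 * stdNormalQuantile α := by
    have h2q : Real.sqrt 2 * stdNormalQuantile α ≥ 2 * stdNormalQuantile α :=
      mul_le_mul_of_nonpos_right hsqrt2 hqneg.le
    linarith
  refine ⟨by nlinarith, by nlinarith, fun h => ?_⟩
  obtain ⟨_, hlt⟩ := h.2 ⟨hstouffer, by nlinarith⟩
  nlinarith
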